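/- If x and y are two short roots of Λ = E^{1,4} (vectors of norm -1) whose orthogonal complements both contain a common vector of positive norm, then x and y are orthogonal or proportional; in particular, any two distinct short mirrors of the ball B_4 are either orthogonal or disjoint. -/
import Mathlib

noncomputable def ω : ℂ := (-1 + Real.sqrt 3 * Complex.I) / 2

def inE (z : ℂ) : Prop := ∃ a b : ℤ, z = a + b * ω

noncomputable def herm (x y : Fin 5 → ℂ) : ℂ :=
  (starRingEnd ℂ) (x 0) * y 0 - (starRingEnd ℂ) (x 1) * y 1 - (starRingEnd ℂ) (x 2) * y 2 -
    (starRingEnd ℂ) (x 3) * y 3 - (starRingEnd ℂ) (x 4) * y 4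

lemma conj_ω : (starRingEnd ℂ) ω = -1 - ω := by
  simp only [ω, map_div₀, map_add, map_mul, map_neg, map_one, Complex.conj_I,
    Complex.conj_ofReal, map_ofNat]
  ring

lemma ω_mul_ω : ω * ω = -1 - ω := by
  have h3 : (Real.sqrt 3 : ℂ) * (Real.sqrt 3 : ℂ) = 3 := by
    norm_cast
    rw [Real.mul_self_sqrt]; norm_num
  have hI := Complex.I_sq
  simp only [ω]
  linear_combination (Complex.I^2/4) * h3 + ((3:ℂ)/4) * hI

lemma inE.conj {z : ℂ} (h : inE z) : inE ((starRingEnd ℂ) z) := by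
  obtain ⟨a, b, rfl⟩ := h
  refine ⟨a - b, -b, ?_⟩
  push_cast [map_add, map_mul, conj_ω, Complex.conj_ofReal, map_intCast]
  ring

lemma inE.mul {z w : ℂ} (hz : inE z) (hw : inE w) : inE (z * w) := by
  obtain ⟨a, b, rfl⟩ := hz
  obtain ⟨c, d, rfl⟩ := hw
  refine ⟨a * c - b * d, a * d + b * c - b * d, ?_⟩
  push_cast
  linear_combination ((b : ℂ) * d) * ω_mul_ω

lemma inE.sub {z w : ℂ} (hz : inE z) (hw : inE w) : inE (z - w) := by
  obtain ⟨a, b, rfl⟩ := hz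
  obtain ⟨c, d, rfl⟩ := hw
  exact ⟨a - c, b - d, by push_cast; ring⟩

lemma inE_herm {x y : Fin 5 → ℂ} (hx : ∀ i, inE (x i)) (hy : ∀ i, inE (y i)) :
    inE (herm x y) :=
  ((((((hx 0).conj.mul (hy 0)).sub ((hx 1).conj.mul (hy 1))).sub
    ((hx 2).conj.mul (hy 2))).sub ((hx 3).conj.mul (hy 3))).sub ((hx 4).conj.mul (hy 4)))

/-- An Eisenstein integer of squared modulus less than 1 is zero. -/
lemma inE_small {t : ℂ} (ht : inE t) (h : ((starRingEnd ℂ) t * t).re < 1) : t = 0 := by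
  obtain ⟨a, b, rfl⟩ := ht
  have key : (starRingEnd ℂ) ((a : ℂ) + b * ω) * ((a : ℂ) + b * ω)
      = ((a^2 - a*b + b^2 : ℤ) : ℂ) := by
    push_cast [map_add, map_mul, conj_ω, map_intCast]
    linear_combination (-(b:ℂ)^2) * ω_mul_ω
  rw [key] at h
  rw [Complex.intCast_re] at h
  have hn : (0:ℤ) ≤ a^2 - a*b + b^2 := by nlinarith [sq_nonneg (a - b), sq_nonneg a, sq_nonneg b]
  have h1 : a^2 - a*b + b^2 < 1 := by exact_mod_cast h
  have hz : a^2 - a*b + b^2 = 0 := le_antisymm (by omega) hn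
  have ha : a = 0 ∧ b = 0 := by
    constructor <;> nlinarith [sq_nonneg (a - b), sq_nonneg (a + b), sq_nonneg a, sq_nonneg b]
  simp [ha.1, ha.2]

lemma herm_conj (x y : Fin 5 → ℂ) : herm y x = (starRingEnd ℂ) (herm x y) := by
  simp only [herm, map_sub, map_mul, Complex.conj_conj]
  ring

lemma herm_re (w : Fin 5 → ℂ) : (herm w w).re =
    Complex.normSq (w 0) - Complex.normSq (w 1) - Complex.normSq (w 2) -
      Complex.normSq (w 3) - Complex.normSq (w 4) := by
  have : ∀ z : ℂ, (starRingEnd ℂ) z * z = (Complex.normSq z : ℂ) := fun z => by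
    rw [mul_comm, Complex.mul_conj]
  simp only [herm, this]
  norm_cast

/-- The orthogonal complement of a positive vector is negative definite. -/
lemma key_neg (p z : Fin 5 → ℂ) (hpp : 0 < (herm p p).re) (hpz : herm p z = 0)
    (hz : z ≠ 0) : (herm z z).re < 0 := by
  by_contra hc
  push_neg at hc
  -- the auxiliary vector with vanishing 0-th coordinate
  set v : Fin 5 → ℂ := fun i => z 0 * p i - p 0 * z i with hv
  have hzp : herm z p = 0 := by rw [herm_conj, hpz, map_zero]
  have hvv : herm v v = (starRingEnd ℂ) (z 0) * z 0 * herm p p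
      + (starRingEnd ℂ) (p 0) * p 0 * herm z z
      - (starRingEnd ℂ) (z 0) * p 0 * herm p z
      - (starRingEnd ℂ) (p 0) * z 0 * herm z p := by
    simp only [herm, hv, map_sub, map_mul]
    ring
  rw [hpz, hzp, mul_zero, mul_zero, sub_zero, sub_zero] at hvv
  have hmc : ∀ w : ℂ, (starRingEnd ℂ) w * w = (Complex.normSq w : ℂ) := fun w => by
    rw [mul_comm, Complex.mul_conj]
  rw [hmc, hmc] at hvv
  have hvvre : (herm v v).re = Complex.normSq (z 0) * (herm p p).re
      + Complex.normSq (p 0) * (herm z z).re := by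
    rw [hvv]
    simp [Complex.add_re, Complex.mul_re, Complex.ofReal_re, Complex.ofReal_im]
  have hv0 : v 0 = 0 := by simp [hv]; ring
  have hvneg : (herm v v).re ≤ 0 := by
    rw [herm_re, hv0]
    simp only [Complex.normSq_zero]
    nlinarith [Complex.normSq_nonneg (v 1), Complex.normSq_nonneg (v 2),
      Complex.normSq_nonneg (v 3), Complex.normSq_nonneg (v 4)]
  -- z 0 must vanish
  have hz0 : z 0 = 0 := by
    by_contra hz0
    have h1 : 0 < Complex.normSq (z 0) := Complex.normSq_pos.mpr hz0
    nlinarith [Complex.normSq_nonneg (p 0)]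
  -- but then herm z z is strictly negative since z ≠ 0
  have hre := herm_re z
  rw [hz0, Complex.normSq_zero] at hre
  have n1 := Complex.normSq_nonneg (z 1)
  have n2 := Complex.normSq_nonneg (z 2)
  have n3 := Complex.normSq_nonneg (z 3)
  have n4 := Complex.normSq_nonneg (z 4)
  have e1 : Complex.normSq (z 1) = 0 := by linarith
  have e2 : Complex.normSq (z 2) = 0 := by linarith
  have e3 : Complex.normSq (z 3) = 0 := by linarith
  have e4 : Complex.normSq (z 4) = 0 := by linarith
  apply hz
  funext i
  fin_cases i
  · exact hz0
  · exact Complex.normSq_eq_zero.mp e1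
  · exact Complex.normSq_eq_zero.mp e2
  · exact Complex.normSq_eq_zero.mp e3
  · exact Complex.normSq_eq_zero.mp e4

theorem stmt5 (x y p : Fin 5 → ℂ)
    (hx : ∀ i, inE (x i)) (hy : ∀ i, inE (y i))
    (hxx : herm x x = -1) (hyy : herm y y = -1)
    (hpp : 0 < (herm p p).re) (hpx : herm p x = 0) (hpy : herm p y = 0) :
    herm x y = 0 ∨ ∃ c : ℂ, y = c • x := by
  set t : ℂ := herm x y with ht
  set z : Fin 5 → ℂ := fun i => y i + t * x i with hz
  by_cases hz0 : z = 0
  · right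
    refine ⟨-t, funext fun i => ?_⟩
    have := congrFun hz0 i
    simp only [hz, Pi.zero_apply] at this
    simp only [Pi.smul_apply, smul_eq_mul]
    linear_combination this
  · left
    have hpz : herm p z = 0 := by
      have : herm p z = herm p y + t * herm p x := by
        simp only [herm, hz, map_add, map_mul]; ring
      rw [this, hpx, hpy]; ring
    have hzz : herm z z = -1 + (starRingEnd ℂ) t * t := by
      have hyx : herm y x = (starRingEnd ℂ) t := herm_conj x y
      have : herm z z = herm y y + t * herm y x + (starRingEnd ℂ) t * herm x y
          + (starRingEnd ℂ) t * t * herm x x := by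
        simp only [herm, hz, map_add, map_mul]; ring
      rw [this, hxx, hyy, hyx, ← ht]
      ring
    have hneg := key_neg p z hpp hpz hz0
    rw [hzz] at hneg
    have : ((starRingEnd ℂ) t * t).re < 1 := by
      have := Complex.add_re (-1) ((starRingEnd ℂ) t * t)
      simp only [Complex.neg_re, Complex.one_re] at this
      rw [this] at hneg
      linarith
    exact inE_small (inE_herm hx hy) this
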